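/- arXiv:1702.04007 — 5 statements merged into one kernel-verified Lean document; each statement's English description precedes it below -/
import Mathlib

section
/- Let m be a positive integer and x a real number. For every n ≥ 0, the Hankel determinant of the Dowling polynomials satisfies det( (D_m(i+j, x))_{0 ≤ i,j ≤ n} ) = (m·x)^{C(n+1,2)} · ∏_{k=0}^n k!, where C(n+1,2) = n(n+1)/2. -/
/-- Whitney numbers of the second kind:
`W_m(n,k) = (1/(m^k k!)) ∑_{i=0}^k (−1)^{k−i} C(k,i) (mi+1)^n`. -/
noncomputable def whitney2 (m n k : ℕ) : ℝ :=
  (1 / ((m : ℝ) ^ k * k.factorial)) *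
    ∑ i ∈ Finset.range (k + 1), (-1 : ℝ) ^ (k - i) * (k.choose i) * ((m : ℝ) * i + 1) ^ n

/-- Dowling polynomials `D_m(n,x) = ∑_{k=0}^n W_m(n,k) x^k`. -/
noncomputable def dowling (m n : ℕ) (x : ℝ) : ℝ :=
  ∑ k ∈ Finset.range (n + 1), whitney2 m n k * x ^ k

/-!
Put `a = x / m`. Dobinski's formula `e^a D_m(N, m a) = ∑_c (a^c / c!) (mc + 1)^N` makes the
Hankel entry `D_m(i + j, x)` a Poisson-weighted inner product of `(mc + 1)^i` and `(mc + 1)^j`.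
Newton's forward-difference expansion `(mc + 1)^i = ∑_r B_{ir} C(c, r)` has a lower triangular
coefficient matrix with `B_{ir} = m^r r! W_m(i, r)`, so `B_{rr} = m^r r!`. By Vandermonde's identity
the inner products of binomial coefficients form the matrix `E F`, with `E` unitriangular and `F`
upper triangular with diagonal `a^s / s!`. So the Hankel matrix is `B (E F) Bᵀ`, and its
determinant is `∏_k m^{2k} k!² a^k / k! = ∏_k (m x)^k k!`.
-/

open Finset Polynomial fwdDiff Nat Matrix

theorem shift_eq_sum_range_fwdDiff_iter {M G : Type*} [AddCommMonoid M] [AddCommGroup G]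
    {h : M} {f : M → G} {y : M} {K : ℕ} (hf : ∀ k, K < k → Δ_[h] ^[k] f y = 0) (n : ℕ) :
    f (y + n • h) = ∑ k ∈ range (K + 1), n.choose k • Δ_[h] ^[k] f y := by
  rw [shift_eq_sum_fwdDiff_iter h f n y,
    sum_subset (range_subset_range.mpr (by omega : n + 1 ≤ n + K + 1)),
    sum_subset (range_subset_range.mpr (by omega : K + 1 ≤ n + K + 1))]
  · intro k _ hk
    rw [hf k (by simpa using hk), smul_zero]
  · intro k _ hk
    rw [choose_eq_zero_of_lt (by simpa using hk), zero_smul]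

section LinearPow

variable {R : Type*} [CommRing R]

theorem eval_C_mul_X_add_one_pow (m : R) (N : ℕ) :
    ((C m * X + 1) ^ N).eval = fun r : R => (m * r + 1) ^ N := by
  ext r; simp

theorem fwdDiff_iter_linear_pow_eq_zero_of_lt (m : R) {N k : ℕ} (h : N < k) :
    Δ_[1] ^[k] (fun r : R => (m * r + 1) ^ N) = 0 := by
  have hdeg : ((C m * X + 1) ^ N).natDegree ≤ N := by
    simpa using natDegree_pow_le_of_le N (natDegree_linear_le (a := m) (b := 1))
  rw [← eval_C_mul_X_add_one_pow]
  exact fwdDiff_iter_eq_zero_of_degree_lt (hdeg.trans_lt h)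

theorem pow_linear_eq_sum_choose_mul_fwdDiff_iter (m : R) {N K : ℕ} (hNK : N ≤ K) (c : ℕ) :
    (m * c + 1) ^ N =
      ∑ k ∈ range (K + 1), c.choose k * Δ_[1] ^[k] (fun r : R => (m * r + 1) ^ N) 0 := by
  have := shift_eq_sum_range_fwdDiff_iter (h := (1 : R)) (f := fun r => (m * r + 1) ^ N) (y := 0)
    (K := K) (fun k hk => by rw [fwdDiff_iter_linear_pow_eq_zero_of_lt m (by omega)]; rfl) c
  simpa [nsmul_eq_mul] using this

theorem fwdDiff_iter_linear_pow_self [NoZeroDivisors R] {m : R} (hm : m ≠ 0) (N : ℕ) :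
    Δ_[1] ^[N] (fun r : R => (m * r + 1) ^ N) = fun _ => m ^ N * N ! := by
  have hdeg : ((C m * X + 1) ^ N).natDegree = N := by
    rw [natDegree_pow, ← C_1, natDegree_linear hm, mul_one]
  have hlead : ((C m * X + 1) ^ N).leadingCoeff = m ^ N := by
    rw [leadingCoeff_pow, ← C_1, leadingCoeff_linear hm]
  have := fwdDiff_iter_degree_eq_factorial ((C m * X + 1) ^ N)
  rw [hdeg, hlead, eval_C_mul_X_add_one_pow] at this
  exact this.trans (funext fun _ => by simp)

end LinearPow

theorem whitney2_eq_fwdDiff_iter (m N k : ℕ) :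
    whitney2 m N k =
      Δ_[1] ^[k] (fun r : ℝ => ((m : ℝ) * r + 1) ^ N) 0 / ((m : ℝ) ^ k * k !) := by
  rw [whitney2, fwdDiff_iter_eq_sum_shift, one_div, inv_mul_eq_div]
  congr 1
  refine sum_congr rfl fun i _ => ?_
  simp [zsmul_eq_mul]

section PoissonSeries

variable (a : ℝ)

theorem hasSum_pow_div_factorial_mul_choose_mul {s : ℕ} {f : ℕ → ℝ} {S : ℝ}
    (hf : HasSum (fun d => a ^ d / d ! * f (d + s)) S) :
    HasSum (fun c => a ^ c / c ! * (f c * c.choose s)) (a ^ s / s ! * S) := by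
  rw [← hasSum_nat_add_iff' s]
  have hlow : ∑ c ∈ range s, a ^ c / c ! * (f c * c.choose s) = 0 :=
    sum_eq_zero fun c hc => by simp [choose_eq_zero_of_lt (mem_range.mp hc)]
  rw [hlow, sub_zero]
  refine (hf.mul_left (a ^ s / s !)).congr_fun fun d => ?_
  have hfac : ((d + s).choose s : ℝ) * d ! * s ! = (d + s)! := by
    exact_mod_cast add_choose_mul_factorial_mul_factorial d s
  field_simp
  rw [← hfac, pow_add]
  ring

theorem hasSum_pow_div_factorial_mul_choose (r : ℕ) :
    HasSum (fun c => a ^ c / c ! * c.choose r) (a ^ r / r ! * Real.exp a) := by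
  have hexp : HasSum (fun d => a ^ d / d ! * 1) (Real.exp a) := by
    simpa [Real.exp_eq_exp_ℝ] using NormedSpace.expSeries_div_hasSum_exp a
  simpa using hasSum_pow_div_factorial_mul_choose_mul a (f := fun _ => 1) hexp

theorem hasSum_pow_div_factorial_mul_choose_mul_choose (r s : ℕ) :
    HasSum (fun c => a ^ c / c ! * (c.choose r * c.choose s))
      (a ^ s / s ! *
        ∑ l ∈ range (r + 1), s.choose l * (a ^ (r - l) / (r - l)! * Real.exp a)) := by
  refine hasSum_pow_div_factorial_mul_choose_mul a ?_
  simp_rw [add_comm _ s, add_choose_eq, Nat.sum_antidiagonal_eq_sum_range_succ_mk, cast_sum,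
    cast_mul, mul_sum]
  refine hasSum_sum fun l _ => ?_
  exact ((hasSum_pow_div_factorial_mul_choose a (r - l)).mul_left _).congr_fun fun d => by ring

end PoissonSeries

theorem hasSum_dowling_mul_exp {m : ℕ} (hm : m ≠ 0) (a : ℝ) (N : ℕ) :
    HasSum (fun c : ℕ => a ^ c / c ! * ((m : ℝ) * c + 1) ^ N)
      (dowling m N (m * a) * Real.exp a) := by
  simp_rw [pow_linear_eq_sum_choose_mul_fwdDiff_iter (m : ℝ) le_rfl, mul_sum, dowling, sum_mul]
  refine hasSum_sum fun k _ => ?_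
  set b := Δ_[1] ^[k] (fun r : ℝ => ((m : ℝ) * r + 1) ^ N) 0
  have hcoeff : whitney2 m N k * (m * a) ^ k * Real.exp a = a ^ k / k ! * Real.exp a * b := by
    rw [whitney2_eq_fwdDiff_iter]
    field_simp
    ring
  rw [hcoeff]
  exact ((hasSum_pow_div_factorial_mul_choose a k).mul_right b).congr_fun fun c => by ring

noncomputable def whitneyMatrix (m n : ℕ) : Matrix (Fin (n + 1)) (Fin (n + 1)) ℝ :=
  of fun i k => Δ_[1] ^[k] (fun r : ℝ => ((m : ℝ) * r + 1) ^ (i : ℕ)) 0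

noncomputable def expTaylorMatrix (a : ℝ) (n : ℕ) : Matrix (Fin (n + 1)) (Fin (n + 1)) ℝ :=
  of fun r l => if (l : ℕ) ≤ r then a ^ (r - l : ℕ) / (r - l : ℕ)! else 0

noncomputable def chooseMatrix (a : ℝ) (n : ℕ) : Matrix (Fin (n + 1)) (Fin (n + 1)) ℝ :=
  of fun l s => (s : ℕ).choose l * (a ^ (s : ℕ) / (s : ℕ)!)

theorem hasSum_choose_mul_choose_eq_mul_apply (a : ℝ) {n : ℕ} (r s : Fin (n + 1)) :
    HasSum (fun c => a ^ c / c ! * (c.choose r * c.choose s))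
      ((expTaylorMatrix a n * chooseMatrix a n) r s * Real.exp a) := by
  convert hasSum_pow_div_factorial_mul_choose_mul_choose a r s using 1
  simp only [mul_apply, expTaylorMatrix, chooseMatrix, of_apply, sum_mul, mul_sum]
  rw [Fin.sum_univ_eq_sum_range (fun l => (if l ≤ (r : ℕ) then a ^ (r - l) / (r - l)! else 0) *
    ((s : ℕ).choose l * (a ^ (s : ℕ) / (s : ℕ)!)) * Real.exp a) (n + 1)]
  rw [← sum_subset (range_subset_range.mpr (by omega : (r : ℕ) + 1 ≤ n + 1))]
  · refine sum_congr rfl fun l hl => ?_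
    rw [if_pos (by simpa [Nat.lt_succ_iff] using hl)]
    ring
  · intro l _ hl
    rw [if_neg (by simpa [Nat.lt_succ_iff] using hl), zero_mul, zero_mul]

theorem whitneyMatrix_det {m : ℕ} (hm : m ≠ 0) (n : ℕ) :
    (whitneyMatrix m n).det = ∏ i ∈ range (n + 1), ((m : ℝ) ^ i * i !) := by
  rw [det_of_isLowerTriangular _ fun i k (hik : i < k) => ?_, ← Fin.prod_univ_eq_prod_range]
  · simp [whitneyMatrix, fwdDiff_iter_linear_pow_self (Nat.cast_ne_zero.mpr hm : (m : ℝ) ≠ 0)]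
  · simp [whitneyMatrix, fwdDiff_iter_linear_pow_eq_zero_of_lt _ hik]

theorem expTaylorMatrix_det (a : ℝ) (n : ℕ) : (expTaylorMatrix a n).det = 1 := by
  rw [det_of_isLowerTriangular _ fun r l (hrl : r < l) => ?_]
  · simp [expTaylorMatrix]
  · simp [expTaylorMatrix, hrl.not_ge]

theorem chooseMatrix_det (a : ℝ) (n : ℕ) :
    (chooseMatrix a n).det = ∏ i ∈ range (n + 1), a ^ i / i ! := by
  rw [det_of_isUpperTriangular fun l s (hsl : s < l) => ?_, ← Fin.prod_univ_eq_prod_range]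
  · simp [chooseMatrix]
  · simp [chooseMatrix, choose_eq_zero_of_lt (show (s : ℕ) < l from hsl)]

theorem pow_linear_eq_sum_whitneyMatrix_mul_choose (m : ℕ) {n : ℕ} (i : Fin (n + 1)) (c : ℕ) :
    ((m : ℝ) * c + 1) ^ (i : ℕ) = ∑ r : Fin (n + 1), whitneyMatrix m n i r * c.choose r := by
  rw [pow_linear_eq_sum_choose_mul_fwdDiff_iter (m : ℝ) (Nat.lt_succ_iff.mp i.2),
    ← Fin.sum_univ_eq_sum_range]
  simp [whitneyMatrix, mul_comm]

theorem hankel_dowling_eq_mul {m : ℕ} (hm : m ≠ 0) (a : ℝ) (n : ℕ) :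
    (of fun i j : Fin (n + 1) => dowling m (i + j) (m * a)) =
      whitneyMatrix m n * (expTaylorMatrix a n * chooseMatrix a n) * (whitneyMatrix m n)ᵀ := by
  ext i j
  set B := whitneyMatrix m n
  set G := expTaylorMatrix a n * chooseMatrix a n
  have hentry : (B * G * Bᵀ) i j = ∑ r, ∑ s, B i r * B j s * G r s := by
    simp only [mul_apply, transpose_apply, sum_mul]
    rw [sum_comm]
    exact sum_congr rfl fun _ _ => sum_congr rfl fun _ _ => by ring
  refine mul_right_cancel₀ (Real.exp_ne_zero a)
    ((hasSum_dowling_mul_exp hm a (i + j)).unique ?_)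
  simp_rw [pow_add, pow_linear_eq_sum_whitneyMatrix_mul_choose m, hentry, sum_mul_sum, mul_sum,
    sum_mul]
  refine hasSum_sum fun r _ => hasSum_sum fun s _ => ?_
  rw [mul_assoc]
  exact ((hasSum_choose_mul_choose_eq_mul_apply a r s).mul_left (B i r * B j s)).congr_fun
    fun c => by ring

theorem det_hankel_dowling {m : ℕ} (hm : m ≠ 0) (a : ℝ) (n : ℕ) :
    (of fun i j : Fin (n + 1) => dowling m (i + j) (m * a)).det =
      ((m : ℝ) * (m * a)) ^ ((n + 1).choose 2) * ∏ k ∈ range (n + 1), (k ! : ℝ) := by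
  rw [hankel_dowling_eq_mul hm, det_mul, det_mul, det_mul, det_transpose, whitneyMatrix_det hm,
    expTaylorMatrix_det, chooseMatrix_det, one_mul, ← prod_mul_distrib, ← prod_mul_distrib,
    choose_two_right, ← sum_range_id, ← prod_pow_eq_pow_sum, ← prod_mul_distrib]
  refine prod_congr rfl fun k _ => ?_
  field_simp
  ring

/-- The Hankel determinant of the Dowling polynomials is
`(mx)^{C(n+1,2)} ∏_{k=0}^n k!`. -/
theorem dowling_hankel (m : ℕ) (hm : 0 < m) (x : ℝ) (n : ℕ) :
    Matrix.det (Matrix.of fun i j : Fin (n + 1) => dowling m ((i : ℕ) + (j : ℕ)) x) =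
      ((m : ℝ) * x) ^ ((n + 1).choose 2) *
        ∏ k ∈ Finset.range (n + 1), (k.factorial : ℝ) := by
  have hx : (m : ℝ) * (x / m) = x := mul_div_cancel₀ x (Nat.cast_ne_zero.mpr hm.ne')
  simpa only [hx] using det_hankel_dowling hm.ne' (x / m) n
end

section
/- Let m be a positive integer and x a real number. Then in ℝ[[z]] the exponential generating function of the Eulerian-Dowling polynomials satisfies (e^{mz(x−1)} − (mx − m + 1)) · ∑_{n≥0} 𝓐_m(n,x) z^n/n! = m(1−x)·e^{z(x−1)}. -/
/-- Eulerian–Dowling polynomials `𝓐_m(n,x) = ∑_{k=0}^n k!·W_m(n,k)·(x−1)^{n−k}`. -/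
noncomputable def eulerianDowling (m n : ℕ) (x : ℝ) : ℝ :=
  ∑ k ∈ Finset.range (n + 1), (k.factorial : ℝ) * whitney2 m n k * (x - 1) ^ (n - k)

/-!
Write `y = x - 1` and `H = (e^{myz} - 1)/(my)`. Expanding `e^{yz}(e^{myz} - 1)^k` binomially shows
that the `k`-th summand of `𝓐_m(n,x) z^n/n!` is the coefficient of `z^n` in `e^{yz} H^k`, so the
EGF is `e^{yz} ∑_k H^k = e^{yz}/(1 - H)`, while `e^{myz} - (my + 1) = my (H - 1)`. As `H` has no
constant term, the coefficient of `z^n` only sees the truncation `∑_{k ≤ n} H^k`, and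
`(H - 1) ∑_{k ≤ n} H^k = H^{n+1} - 1`.
-/

open Finset Nat

namespace PowerSeries

theorem coeff_mul_eq_of_coeff_eq {R : Type*} [CommSemiring R] {f g : R⟦X⟧} {n : ℕ}
    (h : ∀ p ≤ n, coeff p f = coeff p g) (e : R⟦X⟧) : coeff n (e * f) = coeff n (e * g) := by
  simp only [coeff_mul]
  exact sum_congr rfl fun pq hpq => by rw [h _ (HasAntidiagonal.antidiagonal.snd_le hpq)]

variable {K : Type*} [Field K]

/-- `(e^{aX} - 1) / a`, in a form that also makes sense for `a = 0`. -/
noncomputable def expSubOneDiv (a : K) : K⟦X⟧ := X * mk fun n => a ^ n / (n + 1)!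

theorem coeff_mul_expSubOneDiv_pow_of_lt (f : K⟦X⟧) (a : K) {n k : ℕ} (h : n < k) :
    coeff n (f * expSubOneDiv a ^ k) = 0 :=
  X_pow_dvd_iff.mp ((pow_dvd_pow_of_dvd (dvd_mul_right X _) k).mul_left f) n h

variable [CharZero K]

theorem coeff_rescale_exp (a : K) (n : ℕ) : coeff n (rescale a (exp K)) = a ^ n / n ! := by
  simp [coeff_rescale, coeff_exp, div_eq_mul_inv]

theorem C_mul_expSubOneDiv (a : K) : C a * expSubOneDiv a = rescale a (exp K) - 1 := by
  ext (_ | n)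
  · rw [expSubOneDiv, mul_left_comm, coeff_zero_X_mul, map_sub, coeff_rescale_exp]
    simp
  · rw [expSubOneDiv, mul_left_comm, coeff_succ_X_mul, coeff_C_mul, coeff_mk, map_sub,
      coeff_rescale_exp, coeff_one, if_neg n.succ_ne_zero]
    ring

theorem coeff_rescale_exp_mul_rescale_exp_sub_one_pow (a b : K) (k n : ℕ) :
    coeff n (rescale b (exp K) * (rescale a (exp K) - 1) ^ k) =
      (∑ i ∈ range (k + 1), (-1) ^ (k - i) * k.choose i * (b + i * a) ^ n) / n ! := by
  rw [sub_eq_add_neg, add_pow, mul_sum, map_sum, sum_div]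
  refine sum_congr rfl fun i _ => ?_
  have hterm : rescale a (exp K) ^ i * (-1) ^ (k - i) * (k.choose i : K⟦X⟧) =
      C ((-1 : K) ^ (k - i) * k.choose i) * rescale (i * a) (exp K) := by
    rw [← map_pow, exp_pow_eq_rescale_exp, rescale_rescale]
    simp only [map_mul, map_pow, map_neg, map_one, map_natCast]
    ring
  rw [hterm, mul_left_comm, exp_mul_exp_eq_exp_add, coeff_C_mul, coeff_rescale_exp]
  ring

theorem coeff_rescale_exp_mul_expSubOneDiv_pow {a : K} (ha : a ≠ 0) (b : K) (k n : ℕ) :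
    coeff n (rescale b (exp K) * expSubOneDiv a ^ k) =
      (∑ i ∈ range (k + 1), (-1) ^ (k - i) * k.choose i * (b + i * a) ^ n) / (a ^ k * n !) := by
  rw [mul_comm (a ^ k), ← div_div, ← coeff_rescale_exp_mul_rescale_exp_sub_one_pow,
    eq_div_iff (pow_ne_zero k ha), ← C_mul_expSubOneDiv, mul_pow, ← map_pow, mul_left_comm,
    coeff_C_mul, mul_comm]

end PowerSeries

open PowerSeries

theorem eulerianDowling_div_factorial_eq_coeff {m : ℕ} (hm : m ≠ 0) {x : ℝ} (hx : x ≠ 1)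
    {n N : ℕ} (hnN : n < N) :
    eulerianDowling m n x / n ! =
      coeff n (rescale (x - 1) (exp ℝ) * ∑ k ∈ range N, expSubOneDiv (m * (x - 1)) ^ k) := by
  have hy : x - 1 ≠ 0 := sub_ne_zero.mpr hx
  rw [mul_sum, map_sum, ← sum_subset (range_subset_range.mpr hnN)
    fun k _ hk => coeff_mul_expSubOneDiv_pow_of_lt _ _ (by simpa using hk),
    eulerianDowling, sum_div]
  refine sum_congr rfl fun k hk => ?_
  have hkn : k ≤ n := Nat.lt_succ_iff.mp (mem_range.mp hk)
  have hsum :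
      ∑ i ∈ range (k + 1), (-1 : ℝ) ^ (k - i) * k.choose i * (x - 1 + i * (m * (x - 1))) ^ n =
        (x - 1) ^ n * ∑ i ∈ range (k + 1), (-1 : ℝ) ^ (k - i) * k.choose i * (m * i + 1) ^ n := by
    rw [mul_sum]
    exact sum_congr rfl fun i _ => by
      rw [show x - 1 + i * (m * (x - 1)) = (x - 1) * (m * i + 1) by ring, mul_pow]; ring
  rw [coeff_rescale_exp_mul_expSubOneDiv_pow (mul_ne_zero (Nat.cast_ne_zero.mpr hm) hy), hsum,
    whitney2, ← pow_sub_mul_pow (x - 1) hkn, mul_pow]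
  field_simp

/-- The EGF of the Eulerian–Dowling polynomials satisfies
`(e^{mz(x−1)} − (mx − m + 1)) · ∑_{n≥0} 𝓐_m(n,x) z^n/n! = m(1−x)·e^{z(x−1)}` in `ℝ[[z]]`. -/
theorem eulerianDowling_egf (m : ℕ) (hm : 0 < m) (x : ℝ) :
    (PowerSeries.rescale ((m : ℝ) * (x - 1)) (PowerSeries.exp ℝ) -
        (PowerSeries.C : ℝ →+* PowerSeries ℝ) ((m : ℝ) * x - m + 1)) *
      PowerSeries.mk (fun n => eulerianDowling m n x / n.factorial) =
      (PowerSeries.C : ℝ →+* PowerSeries ℝ) ((m : ℝ) * (1 - x)) *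
        PowerSeries.rescale (x - 1) (PowerSeries.exp ℝ) := by
  rcases eq_or_ne x 1 with rfl | hx
  · simp
  set G := rescale (x - 1) (exp ℝ)
  set H := expSubOneDiv ((m : ℝ) * (x - 1))
  have hfactor : rescale ((m : ℝ) * (x - 1)) (exp ℝ) - C ((m : ℝ) * x - m + 1) =
      C ((m : ℝ) * (x - 1)) * (H - 1) := by
    rw [mul_sub _ H 1, mul_one, C_mul_expSubOneDiv, sub_sub, ← map_one C, ← map_add]
    congr 2
    ring
  ext n
  have htrunc : ∀ p ≤ n, coeff p (mk fun n => eulerianDowling m n x / n !) =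
      coeff p (G * ∑ k ∈ range (n + 1), H ^ k) := fun p hp => by
    rw [coeff_mk, eulerianDowling_div_factorial_eq_coeff hm.ne' hx (Nat.lt_succ_of_le hp)]
  have hgeom : C ((m : ℝ) * (x - 1)) * (H - 1) * (G * ∑ k ∈ range (n + 1), H ^ k) =
      C ((m : ℝ) * (x - 1)) * (G * H ^ (n + 1)) - C ((m : ℝ) * (x - 1)) * G := by
    linear_combination C ((m : ℝ) * (x - 1)) * G * geom_sum_mul H (n + 1)
  rw [coeff_mul_eq_of_coeff_eq htrunc, hfactor, hgeom, map_sub, coeff_C_mul, coeff_C_mul,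
    coeff_mul_expSubOneDiv_pow_of_lt _ _ n.lt_succ_self, coeff_C_mul]
  ring
end

section
/- Let m be a positive integer and x a real number. Define polynomials P_n ∈ ℝ[z] by P_0 = 1, P_1 = z − x, and P_n = (z − (x + (n−1)(m(x−1)+2)))·P_{n−1} − (n−1)^2·(m(x−1)+1)·P_{n−2} for n ≥ 2. Let L : ℝ[z] → ℝ be the unique linear functional with L(z^n) = 𝓐_m(n,x) for all n ≥ 0. Then L(P_i · P_j) = 0 whenever i ≠ j; that is, the Eulerian-Dowling polynomials 𝓐_m(n,x) are the moments of the orthogonal polynomial family (P_n). -/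
/-- `P_0 = 1`, `P_1 = z − x`,
`P_n = (z − (x + (n−1)(m(x−1)+2)))·P_{n−1} − (n−1)²·(m(x−1)+1)·P_{n−2}` for `n ≥ 2`. -/
noncomputable def eulerianDowlingOP (m : ℕ) (x : ℝ) : ℕ → Polynomial ℝ
  | 0 => 1
  | 1 => Polynomial.X - Polynomial.C x
  | (n + 2) =>
      (Polynomial.X - Polynomial.C (x + ((n : ℝ) + 1) * ((m : ℝ) * (x - 1) + 2))) *
          eulerianDowlingOP m x (n + 1) -
        Polynomial.C (((n : ℝ) + 1) ^ 2 * ((m : ℝ) * (x - 1) + 1)) * eulerianDowlingOP m x n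

/-!
Write `λ = m(x-1)+1` and `B(k,n) = ∑_j C(j,n) j! W_m(k,j) (x-1)^(k-j)` (`dowlingMixedMoment`). By
induction on `n`, `L(z^k P_n) = n! λ^n B(k,n)`: the three-term recurrence of `P_n` is matched by
a three-term recurrence of `B` in `k`, which comes from the triangular recurrence
`W_m(k+1,j+1) = W_m(k,j) + (m(j+1)+1) W_m(k,j+1)`. Since `B(k,n) = 0` for `k < n` and
`deg P_j ≤ j`, it follows that `L(P_i P_j) = 0` for `i < j`.

The Whitney recurrence is a Leibniz rule for forward differences, because
`m^k k! W_m(n,k)` is the `k`-th forward difference of `t ↦ (mt+1)^n` at `0`.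
-/

open Finset Polynomial
open scoped fwdDiff Nat

theorem fwdDiff_iter_succ_affine_mul {R : Type*} [CommRing R] (a b : R) (f : R → R) (n : ℕ)
    (t : R) :
    Δ_[1] ^[n + 1] (fun s ↦ (a * s + b) * f s) t =
      (a * (t + (n + 1)) + b) * Δ_[1] ^[n + 1] f t + (n + 1) * a * Δ_[1] ^[n] f t := by
  have hstep (g : R → R) (k : ℕ) (s : R) :
      Δ_[1] ^[k + 1] g s = Δ_[1] ^[k] g (s + 1) - Δ_[1] ^[k] g s := by
    rw [Function.iterate_succ_apply']
    rfl
  induction n generalizing t with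
  | zero =>
    simp only [hstep, Function.iterate_zero, id_eq, Nat.cast_zero]
    ring
  | succ n ih =>
    rw [hstep _ (n + 1) t, ih, ih, hstep f (n + 1) t, hstep f n t]
    push_cast
    ring

theorem whitney2_eq_fwdDiff (m n k : ℕ) :
    whitney2 m n k = Δ_[1] ^[k] (fun t : ℝ ↦ (m * t + 1) ^ n) 0 / (m ^ k * k !) := by
  rw [whitney2, fwdDiff_iter_eq_sum_shift, one_div, div_eq_inv_mul]
  congr 1
  refine sum_congr rfl fun i _ ↦ ?_
  simp [zsmul_eq_mul]

theorem whitney2_zero_right (m n : ℕ) : whitney2 m n 0 = 1 := by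
  simp [whitney2]

theorem whitney2_eq_zero_of_lt (m : ℕ) {n k : ℕ} (h : n < k) : whitney2 m n k = 0 := by
  have hdeg : ((C (m : ℝ) * X + 1) ^ n).natDegree < k := by
    have hlin : (C (m : ℝ) * X + 1).natDegree ≤ 1 := by compute_degree!
    exact lt_of_le_of_lt (natDegree_pow_le_of_le n hlin) (by simpa using h)
  have := congr_fun (fwdDiff_iter_eq_zero_of_degree_lt hdeg) 0
  simp only [eval_pow, eval_add, eval_mul, eval_C, eval_X, eval_one] at this
  rw [whitney2_eq_fwdDiff, this, Pi.zero_apply, zero_div]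

theorem whitney2_succ_succ {m : ℕ} (hm : m ≠ 0) (n k : ℕ) :
    whitney2 m (n + 1) (k + 1) = whitney2 m n k + (m * (k + 1) + 1) * whitney2 m n (k + 1) := by
  have hleib := fwdDiff_iter_succ_affine_mul (m : ℝ) 1 (fun t : ℝ ↦ (m * t + 1) ^ n) k 0
  simp only [← pow_succ'] at hleib
  simp only [whitney2_eq_fwdDiff, hleib, Nat.factorial_succ]
  have : (m : ℝ) ≠ 0 := by exact_mod_cast hm
  field_simp
  push_cast
  ring

theorem Nat.self_mul_choose (j n : ℕ) :
    j * j.choose n = n * j.choose n + (n + 1) * j.choose (n + 1) := by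
  have h := Nat.add_one_mul_choose_eq j n
  rw [Nat.choose_succ_succ'] at h
  linarith

noncomputable def dowlingMixedMoment (m : ℕ) (x : ℝ) (k n : ℕ) : ℝ :=
  ∑ p ∈ antidiagonal k, (p.1.choose n : ℝ) * (p.1 ! * whitney2 m k p.1) * (x - 1) ^ p.2

theorem dowlingMixedMoment_zero_right (m : ℕ) (x : ℝ) (k : ℕ) :
    dowlingMixedMoment m x k 0 = eulerianDowling m k x := by
  rw [dowlingMixedMoment, Nat.sum_antidiagonal_eq_sum_range_succ
    (fun j i ↦ (j.choose 0 : ℝ) * (j ! * whitney2 m k j) * (x - 1) ^ i)]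
  simp [eulerianDowling, mul_assoc]

theorem dowlingMixedMoment_eq_zero_of_lt (m : ℕ) (x : ℝ) {k n : ℕ} (h : k < n) :
    dowlingMixedMoment m x k n = 0 := by
  refine sum_eq_zero fun p hp ↦ ?_
  have : p.1 < n := by have := mem_antidiagonal.mp hp; omega
  simp [Nat.choose_eq_zero_of_lt this]

theorem dowlingMixedMoment_succ {m : ℕ} (hm : m ≠ 0) (x : ℝ) (k n : ℕ) :
    dowlingMixedMoment m x (k + 1) n = ∑ p ∈ antidiagonal k,
      ((m * p.1 + 1) * (x - 1) * p.1.choose n + (p.1 + 1) * (p.1 + 1).choose n) *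
        (p.1 ! * whitney2 m k p.1) * (x - 1) ^ p.2 := by
  have hsplit : dowlingMixedMoment m x (k + 1) n =
      ∑ p ∈ antidiagonal (k + 1),
        (p.1.choose n : ℝ) * (m * p.1 + 1) * (p.1 ! * whitney2 m k p.1) * (x - 1) ^ p.2 +
      ∑ p ∈ antidiagonal k,
        (p.1 + 1) * ((p.1 + 1).choose n : ℝ) * (p.1 ! * whitney2 m k p.1) * (x - 1) ^ p.2 := by
    rw [dowlingMixedMoment, Nat.sum_antidiagonal_succ, Nat.sum_antidiagonal_succ, add_assoc,
      ← sum_add_distrib]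
    simp only [whitney2_zero_right, whitney2_succ_succ hm, Nat.factorial_succ]
    push_cast
    congr 1
    · ring
    · exact sum_congr rfl fun p _ ↦ by ring
  have hshift : ∑ p ∈ antidiagonal (k + 1),
        (p.1.choose n : ℝ) * (m * p.1 + 1) * (p.1 ! * whitney2 m k p.1) * (x - 1) ^ p.2 =
      ∑ p ∈ antidiagonal k,
        (p.1.choose n : ℝ) * (m * p.1 + 1) * (p.1 ! * whitney2 m k p.1) *
          (x - 1) ^ (p.2 + 1) := by
    rw [Nat.sum_antidiagonal_succ', whitney2_eq_zero_of_lt m (lt_add_one k)]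
    simp
  rw [hsplit, hshift, ← sum_add_distrib]
  exact sum_congr rfl fun p _ ↦ by ring

theorem dowlingMixedMoment_succ_zero {m : ℕ} (hm : m ≠ 0) (x : ℝ) (k : ℕ) :
    dowlingMixedMoment m x (k + 1) 0 =
      x * dowlingMixedMoment m x k 0 + (m * (x - 1) + 1) * dowlingMixedMoment m x k 1 := by
  rw [dowlingMixedMoment_succ hm]
  simp only [dowlingMixedMoment, mul_sum, ← sum_add_distrib]
  refine sum_congr rfl fun p _ ↦ ?_
  simp only [Nat.choose_zero_right, Nat.choose_one_right]
  push_cast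
  ring

theorem dowlingMixedMoment_succ_succ {m : ℕ} (hm : m ≠ 0) (x : ℝ) (k n : ℕ) :
    dowlingMixedMoment m x (k + 1) (n + 1) = (n + 1) * dowlingMixedMoment m x k n +
      (x + (n + 1) * (m * (x - 1) + 2)) * dowlingMixedMoment m x k (n + 1) +
      (n + 2) * (m * (x - 1) + 1) * dowlingMixedMoment m x k (n + 2) := by
  rw [dowlingMixedMoment_succ hm]
  simp only [dowlingMixedMoment, mul_sum, ← sum_add_distrib]
  refine sum_congr rfl fun p _ ↦ ?_
  have h0 : (p.1 * p.1.choose n : ℝ) = n * p.1.choose n + (n + 1) * p.1.choose (n + 1) := by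
    exact_mod_cast Nat.self_mul_choose p.1 n
  have h1 : (p.1 * p.1.choose (n + 1) : ℝ) =
      (n + 1) * p.1.choose (n + 1) + (n + 2) * p.1.choose (n + 2) := by
    exact_mod_cast Nat.self_mul_choose p.1 (n + 1)
  have hpascal : ((p.1 + 1).choose (n + 1) : ℝ) = p.1.choose n + p.1.choose (n + 1) := by
    exact_mod_cast Nat.choose_succ_succ' p.1 n
  linear_combination (p.1 ! * whitney2 m k p.1 * (x - 1) ^ p.2) *
    ((m * (x - 1) + 1) * h1 + h0 + (p.1 + 1) * hpascal)

theorem eulerianDowlingOP_natDegree_le (m : ℕ) (x : ℝ) (n : ℕ) :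
    (eulerianDowlingOP m x n).natDegree ≤ n := by
  induction n using Nat.twoStepInduction with
  | zero => simp [eulerianDowlingOP]
  | one => simp [eulerianDowlingOP]
  | more n ih0 ih1 =>
    rw [eulerianDowlingOP]
    refine (natDegree_sub_le _ _).trans (max_le ?_ ?_)
    · exact (natDegree_mul_le_of_le (natDegree_X_sub_C_le _) ih1).trans (by omega)
    · exact (natDegree_C_mul_le _ _).trans (by omega)

theorem map_X_pow_mul_eulerianDowlingOP {m : ℕ} (hm : m ≠ 0) {x : ℝ} {L : ℝ[X] →ₗ[ℝ] ℝ}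
    (hL : ∀ n, L (X ^ n) = eulerianDowling m n x) (n k : ℕ) :
    L (X ^ k * eulerianDowlingOP m x n) =
      n ! * (m * (x - 1) + 1) ^ n * dowlingMixedMoment m x k n := by
  have hC (c : ℝ) (p : ℝ[X]) : L (C c * p) = c * L p := by
    rw [← smul_eq_C_mul, map_smul, smul_eq_mul]
  induction n using Nat.twoStepInduction generalizing k with
  | zero => simp [eulerianDowlingOP, hL, dowlingMixedMoment_zero_right]
  | one =>
    have hpoly : X ^ k * eulerianDowlingOP m x 1 = X ^ (k + 1) - C x * X ^ k := by
      rw [eulerianDowlingOP]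
      ring
    rw [hpoly, map_sub, hC, hL, hL, ← dowlingMixedMoment_zero_right,
      ← dowlingMixedMoment_zero_right, dowlingMixedMoment_succ_zero hm]
    simp
  | more n ih0 ih1 =>
    have hpoly : X ^ k * eulerianDowlingOP m x (n + 2) =
        X ^ (k + 1) * eulerianDowlingOP m x (n + 1) -
          C (x + (n + 1) * (m * (x - 1) + 2)) * (X ^ k * eulerianDowlingOP m x (n + 1)) -
          C ((n + 1) ^ 2 * (m * (x - 1) + 1)) * (X ^ k * eulerianDowlingOP m x n) := by
      rw [eulerianDowlingOP]
      ring
    rw [hpoly, map_sub, map_sub, hC, hC, ih1, ih1, ih0, dowlingMixedMoment_succ_succ hm]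
    simp only [Nat.factorial_succ]
    push_cast
    ring

theorem Polynomial.linearMap_mul_eq_zero_of_natDegree_lt {R M : Type*} [CommSemiring R]
    [AddCommMonoid M] [Module R M] (L : R[X] →ₗ[R] M) {p q : R[X]} {n : ℕ}
    (hq : q.natDegree < n) (h : ∀ k < n, L (X ^ k * p) = 0) : L (q * p) = 0 := by
  rw [as_sum_range_C_mul_X_pow' q hq, sum_mul, map_sum]
  refine sum_eq_zero fun k hk ↦ ?_
  rw [mul_assoc, ← smul_eq_C_mul, map_smul, h k (mem_range.mp hk), smul_zero]

/-- The Eulerian–Dowling polynomials `𝓐_m(n,x)` are the moments of the orthogonal family `P_n`. -/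
theorem eulerianDowling_moments (m : ℕ) (hm : 0 < m) (x : ℝ)
    (L : Polynomial ℝ →ₗ[ℝ] ℝ)
    (hL : ∀ n : ℕ, L (Polynomial.X ^ n) = eulerianDowling m n x) :
    ∀ i j : ℕ, i ≠ j → L (eulerianDowlingOP m x i * eulerianDowlingOP m x j) = 0 := by
  have horth {i j : ℕ} (hij : i < j) :
      L (eulerianDowlingOP m x i * eulerianDowlingOP m x j) = 0 :=
    linearMap_mul_eq_zero_of_natDegree_lt L ((eulerianDowlingOP_natDegree_le m x i).trans_lt hij)
      fun k hk ↦ by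
        rw [map_X_pow_mul_eulerianDowlingOP hm.ne' hL, dowlingMixedMoment_eq_zero_of_lt m x hk,
          mul_zero]
  intro i j hij
  rcases hij.lt_or_gt with h | h
  · exact horth h
  · rw [mul_comm]
    exact horth h
end

section
/- Let m be a positive integer and x a real number. Then for every n ≥ 0, the Tanny-Dowling polynomials are the binomial transform of the bivariate geometric polynomials: 𝓕_m(n,x) = ∑_{k=0}^n C(n,k)·ω_k(x,m). -/
/-- Tanny–Dowling polynomials `𝓕_m(n,x) = ∑_{k=0}^n k!·W_m(n,k)·x^k`. -/
noncomputable def tannyDowling (m n : ℕ) (x : ℝ) : ℝ :=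
  ∑ k ∈ Finset.range (n + 1), (k.factorial : ℝ) * whitney2 m n k * x ^ k

/-- Stirling numbers of the second kind:
`S(n,k) = (1/k!) ∑_{j=0}^k (−1)^{k−j} C(k,j) j^n`. -/
noncomputable def stirling2 (n k : ℕ) : ℝ :=
  (1 / (k.factorial : ℝ)) *
    ∑ j ∈ Finset.range (k + 1), (-1 : ℝ) ^ (k - j) * (k.choose j) * (j : ℝ) ^ n

/-- Bivariate geometric polynomials `ω_n(x,m) = ∑_{k=0}^n k!·S(n,k)·x^k·m^{n−k}`. -/
noncomputable def geomPoly (n : ℕ) (x : ℝ) (m : ℕ) : ℝ :=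
  ∑ k ∈ Finset.range (n + 1), (k.factorial : ℝ) * stirling2 n k * x ^ k * (m : ℝ) ^ (n - k)

/-! Since `k! S(r,k)` is the `k`-th forward difference of `j ↦ j ^ r` at `0`, expanding
`(m i + 1) ^ n` binomially gives `k! W_m(n,k) = ∑_r C(n,r) k! S(r,k) m^(r-k)`; the forward
difference vanishes for `r < k`, so after summing against `x ^ k` and exchanging the sums the
inner sum is `ω_r(x,m)`. -/

open Finset

theorem sum_range_neg_one_pow_mul_choose_mul_pow_eq_zero {R : Type*} [CommRing R] {r k : ℕ}
    (h : r < k) :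
    ∑ j ∈ range (k + 1), (-1 : R) ^ (k - j) * k.choose j * (j : R) ^ r = 0 := by
  have := congr_fun (fwdDiff_iter_pow_eq_zero_of_lt (R := R) h) 0
  rw [fwdDiff_iter_eq_sum_shift] at this
  simpa [zsmul_eq_mul, mul_assoc] using this

theorem factorial_mul_stirling2 (n k : ℕ) :
    (k.factorial : ℝ) * stirling2 n k =
      ∑ j ∈ range (k + 1), (-1 : ℝ) ^ (k - j) * k.choose j * (j : ℝ) ^ n := by
  rw [stirling2, ← mul_assoc, mul_one_div_cancel (by positivity), one_mul]

theorem stirling2_eq_zero_of_lt {n k : ℕ} (h : n < k) : stirling2 n k = 0 := by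
  rw [stirling2, sum_range_neg_one_pow_mul_choose_mul_pow_eq_zero h, mul_zero]

theorem geomPoly_eq_sum_range {n N : ℕ} (h : n ≤ N) (x : ℝ) (m : ℕ) :
    geomPoly n x m =
      ∑ k ∈ range (N + 1), (k.factorial : ℝ) * stirling2 n k * x ^ k * (m : ℝ) ^ (n - k) := by
  refine sum_subset (range_subset_range.mpr (by omega)) fun k _ hk ↦ ?_
  rw [stirling2_eq_zero_of_lt (by simpa using hk), mul_zero, zero_mul, zero_mul]

theorem factorial_mul_whitney2 {m : ℕ} (hm : m ≠ 0) (n k : ℕ) :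
    (k.factorial : ℝ) * whitney2 m n k =
      ∑ r ∈ range (n + 1),
        (n.choose r : ℝ) * ((k.factorial : ℝ) * stirling2 r k * m ^ (r - k)) := by
  have hm' : (m : ℝ) ≠ 0 := Nat.cast_ne_zero.mpr hm
  have shift : ∀ r, (m : ℝ) ^ k * ((k.factorial : ℝ) * stirling2 r k * m ^ (r - k)) =
      m ^ r * ((k.factorial : ℝ) * stirling2 r k) := fun r ↦ by
    rcases le_or_gt k r with hkr | hrk
    · rw [← pow_sub_mul_pow _ hkr]; ring
    · rw [stirling2_eq_zero_of_lt hrk]; ring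
  apply mul_left_cancel₀ (pow_ne_zero k hm')
  simp_rw [mul_sum, mul_left_comm _ (n.choose _ : ℝ), shift, factorial_mul_stirling2, mul_sum]
  rw [sum_comm, whitney2]
  field_simp
  refine sum_congr rfl fun i _ ↦ ?_
  rw [add_pow, mul_sum]
  refine sum_congr rfl fun r _ ↦ ?_
  ring

/-- The Tanny–Dowling polynomials are the binomial transform of the bivariate geometric
polynomials: `𝓕_m(n,x) = ∑_{k=0}^n C(n,k)·ω_k(x,m)`. -/
theorem tannyDowling_binomial_transform (m : ℕ) (hm : 0 < m) (x : ℝ) (n : ℕ) :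
    tannyDowling m n x = ∑ k ∈ Finset.range (n + 1), (n.choose k : ℝ) * geomPoly k x m := by
  simp_rw [tannyDowling, factorial_mul_whitney2 hm.ne', sum_mul]
  rw [sum_comm]
  refine sum_congr rfl fun r hr ↦ ?_
  rw [geomPoly_eq_sum_range (mem_range_succ_iff.mp hr), mul_sum]
  exact sum_congr rfl fun k _ ↦ by ring
end

section
/- Let m be a positive integer and x a real number. Then in ℝ[[z]] the exponential generating function of the modified bivariate geometric polynomials satisfies (m + x − x·e^{mz})^2 · ∑_{n≥0} ω̃_n(x,m) z^n/n! = m^2; equivalently ∑_{n≥0} ω̃_n(x,m) z^n/n! = m^2/(m + x − x e^{mz})^2. -/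
/-- Modified bivariate geometric polynomials
`ω̃_n(x,m) = ∑_{k=0}^n (k+1)!·S(n,k)·x^k·m^{n−k}`. -/
noncomputable def geomPolyMod (n : ℕ) (x : ℝ) (m : ℕ) : ℝ :=
  ∑ k ∈ Finset.range (n + 1), ((k + 1).factorial : ℝ) * stirling2 n k * x ^ k * (m : ℝ) ^ (n - k)

/-! The series `w = (e^{mz} - 1)/m` has zero constant term, and by the explicit formula for
`S(n,k)` its powers have coefficients `[z^n] w^k = k! S(n,k) m^(n-k) / n!`. Hence the EGF is
`∑ (k+1) (x w)^k`, i.e. `(1 - X)⁻²` with `x w` substituted for `X`, while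
`m + x - x e^{mz} = m (1 - x w)`. Writing `w = X · rescale m ((e^z - 1)/z)` avoids dividing by `m`. -/

open PowerSeries Finset
open scoped Nat

section ExpSubOneDivX

variable (A : Type*) [CommRing A] [Algebra ℚ A]

noncomputable def expSubOneDivX : A⟦X⟧ := mk fun n => coeff (n + 1) (exp A)

theorem X_mul_expSubOneDivX : X * expSubOneDivX A = exp A - 1 := by
  ext (_ | n) <;> simp [expSubOneDivX, coeff_succ_X_mul]

variable {A}

theorem C_mul_X_mul_rescale_expSubOneDivX (a : A) :
    C a * (X * rescale a (expSubOneDivX A)) = rescale a (exp A) - 1 := by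
  rw [← mul_assoc, ← rescale_X, ← map_mul, X_mul_expSubOneDivX, map_sub, map_one]

theorem coeff_X_mul_rescale_expSubOneDivX_pow (a : A) {k n : ℕ} (hk : k ≤ n) :
    coeff n ((X * rescale a (expSubOneDivX A)) ^ k) = a ^ (n - k) * coeff n ((exp A - 1) ^ k) := by
  rw [mul_pow, ← map_pow, coeff_X_pow_mul', if_pos hk, coeff_rescale, ← X_mul_expSubOneDivX,
    mul_pow, coeff_X_pow_mul', if_pos hk]

end ExpSubOneDivX

theorem mk_succ_mul_one_sub_sq (R : Type*) [CommRing R] :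
    (mk fun n => (n + 1 : R)) * (1 - X) ^ 2 = 1 := by
  simpa [Nat.choose_one_right, add_comm] using mk_add_choose_mul_one_sub_pow_eq_one R 1

theorem one_sub_sq_mul_subst_mk_succ {R : Type*} [CommRing R] {u : R⟦X⟧} (hu : HasSubst u) :
    (1 - u) ^ 2 * (mk fun n => (n + 1 : R)).subst u = 1 := by
  have hmap := congrArg (substAlgHom (R := R) hu) (mk_succ_mul_one_sub_sq R)
  rwa [map_mul, map_pow, map_sub, map_one, substAlgHom_X, coe_substAlgHom, mul_comm] at hmap

theorem coeff_exp_sub_one_pow (k n : ℕ) :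
    coeff n ((exp ℝ - 1) ^ k) = k ! * stirling2 n k / n ! := by
  have hk : (k ! : ℝ) ≠ 0 := by positivity
  rw [sub_pow, map_sum, stirling2, ← mul_assoc, mul_one_div_cancel hk, one_mul, sum_div]
  refine sum_congr rfl fun j hj => ?_
  have hjk : j ≤ k := Nat.lt_succ_iff.mp (mem_range.mp hj)
  have hsign : (-1 : ℝ⟦X⟧) ^ (j + k) = C ((-1) ^ (k - j)) := by
    rw [← Nat.add_sub_cancel' hjk, ← add_assoc, pow_add, ← two_mul, pow_mul]
    simp
  rw [exp_pow_eq_rescale_exp, hsign, one_pow, mul_one, mul_right_comm, ← map_natCast C, ← map_mul,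
    coeff_C_mul, coeff_rescale, coeff_exp]
  simp [div_eq_mul_inv, mul_assoc]

theorem coeff_X_mul_pow_of_lt {R : Type*} [CommSemiring R] (f : R⟦X⟧) {k n : ℕ} (h : n < k) :
    coeff n ((X * f) ^ k) = 0 := by
  rw [mul_pow, coeff_X_pow_mul', if_neg (by omega)]

theorem mk_geomPolyMod_div_factorial_eq_subst (x : ℝ) (m : ℕ) :
    mk (fun n => geomPolyMod n x m / n !) =
      (mk fun n => (n + 1 : ℝ)).subst (C x * (X * rescale (m : ℝ) (expSubOneDivX ℝ))) := by
  set w := X * rescale (m : ℝ) (expSubOneDivX ℝ)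
  have hsubst : HasSubst (C x * w) := HasSubst.of_constantCoeff_zero' (by simp [w])
  have hcoeff (n d : ℕ) : coeff n ((C x * w) ^ d) = x ^ d * coeff n (w ^ d) := by
    rw [mul_pow, ← map_pow, coeff_C_mul]
  ext n
  have hsupp : (fun d => coeff d (mk fun n => (n + 1 : ℝ)) • coeff n ((C x * w) ^ d)).support ⊆
      range (n + 1) := by
    refine Function.support_subset_iff'.2 fun d hd => ?_
    rw [mem_coe, mem_range, not_lt] at hd
    rw [hcoeff, coeff_X_mul_pow_of_lt _ hd, mul_zero, smul_zero]
  rw [coeff_mk, coeff_subst' hsubst, finsum_eq_sum_of_support_subset _ hsupp, geomPolyMod, sum_div]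
  refine sum_congr rfl fun k hk => ?_
  rw [coeff_mk, smul_eq_mul, hcoeff,
    coeff_X_mul_rescale_expSubOneDivX_pow _ (Nat.lt_succ_iff.mp (mem_range.mp hk)),
    coeff_exp_sub_one_pow]
  push_cast [Nat.factorial_succ]
  ring

theorem geomPolyMod_egf_general (m : ℕ) (x : ℝ) :
    (PowerSeries.C ((m : ℝ) + x) -
        PowerSeries.C x * PowerSeries.rescale (m : ℝ) (PowerSeries.exp ℝ)) ^ 2 *
      PowerSeries.mk (fun n => geomPolyMod n x m / n.factorial) =
      PowerSeries.C ((m : ℝ) ^ 2) := by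
  set w := X * rescale (m : ℝ) (expSubOneDivX ℝ)
  have hsubst : HasSubst (C x * w) := HasSubst.of_constantCoeff_zero' (by simp [w])
  have hfactor : C ((m : ℝ) + x) - C x * rescale (m : ℝ) (exp ℝ) = C (m : ℝ) * (1 - C x * w) := by
    have hw : C (m : ℝ) * w = rescale (m : ℝ) (exp ℝ) - 1 := C_mul_X_mul_rescale_expSubOneDivX _
    rw [map_add]
    linear_combination C x * hw
  rw [hfactor, mk_geomPolyMod_div_factorial_eq_subst, mul_pow, mul_assoc,
    one_sub_sq_mul_subst_mk_succ hsubst, mul_one, map_pow]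

/-- The EGF of the modified bivariate geometric polynomials satisfies
`(m + x − x·e^{mz})² · ∑_{n≥0} ω̃_n(x,m) z^n/n! = m²` in `ℝ[[z]]`;
equivalently `∑ ω̃_n(x,m) z^n/n! = m²/(m + x − x e^{mz})²`. -/
theorem geomPolyMod_egf (m : ℕ) (hm : 0 < m) (x : ℝ) :
    (PowerSeries.C ((m : ℝ) + x) -
        PowerSeries.C x * PowerSeries.rescale (m : ℝ) (PowerSeries.exp ℝ)) ^ 2 *
      PowerSeries.mk (fun n => geomPolyMod n x m / n.factorial) =
      PowerSeries.C ((m : ℝ) ^ 2) :=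
  geomPolyMod_egf_general m x
end
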